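/- Let S ⊆ ℝ^d be measurable and let p⁽¹⁾, p⁽²⁾ : ℝ^d → [0, ∞) be probability density functions with respect to Lebesgue measure that vanish outside S and satisfy p⁽¹⁾(x) ≥ p̲ and p⁽²⁾(x) ≥ p̲ for all x ∈ S, where p̲ > 0. Assume sup_{x ∈ ℝ^d} |p⁽¹⁾(x) − p⁽²⁾(x)| ≤ δ. Let κ be a Markov kernel from ℝ^d to a measurable space E and let ℓ : ℝ^d × E → [0, ∞) be measurable; define the risks R⁽ʲ⁾ := ∫_{ℝ^d} (∫_E ℓ(x, c) κ(x, dc)) p⁽ʲ⁾(x) dx for j = 1, 2. Then R⁽²⁾ ≤ R⁽¹⁾ · exp(δ/p̲) and R⁽¹⁾ ≤ R⁽²⁾ · exp(δ/p̲). -/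

import Mathlib

open MeasureTheory ProbabilityTheory Real
open scoped ENNReal

/-!
On `S` the two densities differ by at most `δ ≤ p⁽¹⁾(x) δ / p̲`, so
`p⁽²⁾ ≤ p⁽¹⁾ (1 + δ / p̲) ≤ p⁽¹⁾ exp (δ / p̲)`; off `S` both vanish. Integrating this pointwise
density-ratio bound against the conditional loss `x ↦ ∫ ℓ(x, c) κ(x, dc)` gives the risk bound,
and the argument is symmetric in the two datasets.
-/

theorem le_mul_exp_div_of_abs_sub_le {q r δ pl : ℝ} (hpl : 0 < pl) (hq : pl ≤ q)
    (h : |q - r| ≤ δ) : r ≤ q * exp (δ / pl) := by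
  have hδ : 0 ≤ δ := (abs_nonneg _).trans h
  have hq₀ : 0 ≤ q := hpl.le.trans hq
  calc r ≤ q + δ := by linarith [(abs_le.mp h).1]
    _ ≤ q + q * (δ / pl) := by
        gcongr
        calc δ = pl * (δ / pl) := by field_simp
          _ ≤ q * (δ / pl) := by gcongr
    _ = q * (δ / pl + 1) := by ring
    _ ≤ q * exp (δ / pl) := by gcongr; exact add_one_le_exp _

theorem apply_le_mul_exp_div_of_abs_sub_le {α : Type*} {S : Set α} {q r : α → ℝ} {pl δ : ℝ}
    (hpl : 0 < pl) (hq : ∀ x, 0 ≤ q x) (hr : ∀ x ∉ S, r x = 0) (hlb : ∀ x ∈ S, pl ≤ q x)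
    (hδ : ∀ x, |q x - r x| ≤ δ) (x : α) : r x ≤ q x * exp (δ / pl) := by
  by_cases hx : x ∈ S
  · exact le_mul_exp_div_of_abs_sub_le hpl (hlb x hx) (hδ x)
  · rw [hr x hx]
    exact mul_nonneg (hq x) (exp_pos _).le

theorem lintegral_mul_ofReal_le_of_le_mul {α : Type*} [MeasurableSpace α] {μ : Measure α}
    (g : α → ℝ≥0∞) {q r : α → ℝ} {c : ℝ} (hc : 0 ≤ c) (h : ∀ x, r x ≤ q x * c) :
    ∫⁻ x, g x * ENNReal.ofReal (r x) ∂μ ≤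
      (∫⁻ x, g x * ENNReal.ofReal (q x) ∂μ) * ENNReal.ofReal c := by
  rw [← lintegral_mul_const' _ _ ENNReal.ofReal_ne_top]
  refine lintegral_mono fun x => ?_
  rw [mul_assoc, ← ENNReal.ofReal_mul' hc]
  gcongr
  exact h x

theorem risk_bound_under_distribution_shift_general
    (d : ℕ) (S : Set (EuclideanSpace ℝ (Fin d)))
    (p₁ p₂ : EuclideanSpace ℝ (Fin d) → ℝ)
    (hp₁nonneg : ∀ x, 0 ≤ p₁ x) (hp₂nonneg : ∀ x, 0 ≤ p₂ x)
    (hp₁supp : ∀ x ∉ S, p₁ x = 0) (hp₂supp : ∀ x ∉ S, p₂ x = 0)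
    (pl : ℝ) (hpl : 0 < pl)
    (hp₁lb : ∀ x ∈ S, pl ≤ p₁ x) (hp₂lb : ∀ x ∈ S, pl ≤ p₂ x)
    (δ : ℝ) (hδ : ∀ x, |p₁ x - p₂ x| ≤ δ)
    (E : Type*) [MeasurableSpace E]
    (κ : Kernel (EuclideanSpace ℝ (Fin d)) E)
    (ℓ : EuclideanSpace ℝ (Fin d) × E → ℝ)
    (R₁ R₂ : ℝ≥0∞)
    (hR₁ : R₁ = ∫⁻ x, (∫⁻ c, ENNReal.ofReal (ℓ (x, c)) ∂(κ x)) * ENNReal.ofReal (p₁ x))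
    (hR₂ : R₂ = ∫⁻ x, (∫⁻ c, ENNReal.ofReal (ℓ (x, c)) ∂(κ x)) * ENNReal.ofReal (p₂ x)) :
    R₂ ≤ R₁ * ENNReal.ofReal (Real.exp (δ / pl)) ∧
      R₁ ≤ R₂ * ENNReal.ofReal (Real.exp (δ / pl)) := by
  have hδ' : ∀ x, |p₂ x - p₁ x| ≤ δ := fun x => abs_sub_comm (p₂ x) (p₁ x) ▸ hδ x
  subst hR₁ hR₂
  exact ⟨lintegral_mul_ofReal_le_of_le_mul _ (exp_pos _).le
      (apply_le_mul_exp_div_of_abs_sub_le hpl hp₁nonneg hp₂supp hp₁lb hδ),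
    lintegral_mul_ofReal_le_of_le_mul _ (exp_pos _).le
      (apply_le_mul_exp_div_of_abs_sub_le hpl hp₂nonneg hp₁supp hp₂lb hδ')⟩

/-- Risks under distribution shift: if `p⁽¹⁾, p⁽²⁾` are probability densities supported on `S`,
bounded below by `p̲ > 0` on `S`, with `sup |p⁽¹⁾ − p⁽²⁾| ≤ δ`, then the risks
`R⁽ʲ⁾ = ∫ (∫ ℓ(x,c) κ(x,dc)) p⁽ʲ⁾(x) dx` satisfy `R⁽²⁾ ≤ R⁽¹⁾ exp(δ/p̲)` and
`R⁽¹⁾ ≤ R⁽²⁾ exp(δ/p̲)`. -/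
theorem risk_bound_under_distribution_shift
    (d : ℕ) (S : Set (EuclideanSpace ℝ (Fin d))) (hS : MeasurableSet S)
    (p₁ p₂ : EuclideanSpace ℝ (Fin d) → ℝ)
    (hp₁meas : Measurable p₁) (hp₂meas : Measurable p₂)
    (hp₁nonneg : ∀ x, 0 ≤ p₁ x) (hp₂nonneg : ∀ x, 0 ≤ p₂ x)
    (hp₁prob : ∫⁻ x, ENNReal.ofReal (p₁ x) = 1)
    (hp₂prob : ∫⁻ x, ENNReal.ofReal (p₂ x) = 1)
    (hp₁supp : ∀ x ∉ S, p₁ x = 0) (hp₂supp : ∀ x ∉ S, p₂ x = 0)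
    (pl : ℝ) (hpl : 0 < pl)
    (hp₁lb : ∀ x ∈ S, pl ≤ p₁ x) (hp₂lb : ∀ x ∈ S, pl ≤ p₂ x)
    (δ : ℝ) (hδ : ∀ x, |p₁ x - p₂ x| ≤ δ)
    (E : Type*) [MeasurableSpace E]
    (κ : Kernel (EuclideanSpace ℝ (Fin d)) E) [IsMarkovKernel κ]
    (ℓ : EuclideanSpace ℝ (Fin d) × E → ℝ)
    (hℓmeas : Measurable ℓ) (hℓnonneg : ∀ z, 0 ≤ ℓ z)
    (R₁ R₂ : ℝ≥0∞)
    (hR₁ : R₁ = ∫⁻ x, (∫⁻ c, ENNReal.ofReal (ℓ (x, c)) ∂(κ x)) * ENNReal.ofReal (p₁ x))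
    (hR₂ : R₂ = ∫⁻ x, (∫⁻ c, ENNReal.ofReal (ℓ (x, c)) ∂(κ x)) * ENNReal.ofReal (p₂ x)) :
    R₂ ≤ R₁ * ENNReal.ofReal (Real.exp (δ / pl)) ∧
      R₁ ≤ R₂ * ENNReal.ofReal (Real.exp (δ / pl)) :=
  risk_bound_under_distribution_shift_general d S p₁ p₂ hp₁nonneg hp₂nonneg hp₁supp hp₂supp pl hpl
    hp₁lb hp₂lb δ hδ E κ ℓ R₁ R₂ hR₁ hR₂
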